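/- Let w ≥ 4 and 0 ≤ s ≤ w−2. Then C·B^s·C = 0. -/

import Mathlib

open Matrix

/-- The matrix `B` of MT-type recursions: first row zero, row `i` (0-indexed,
`1 ≤ i ≤ w-2`) is the standard basis row vector with a `1` in column `i+1`,
and the last row is `(a_{w-1}, …, a_0)` (stored as `a 0, …, a (w-1)`). -/
def mtB (w : ℕ) (a : Fin w → ZMod 2) : Matrix (Fin w) (Fin w) (ZMod 2) :=
  Matrix.of fun i j =>
    if (i : ℕ) = w - 1 then a j
    else if 1 ≤ (i : ℕ) ∧ (j : ℕ) = (i : ℕ) + 1 then 1 else 0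

/-- The matrix `C`: its only nonzero entry is a `1` in position `(1,2)` (1-indexed). -/
def mtC (w : ℕ) : Matrix (Fin w) (Fin w) (ZMod 2) :=
  Matrix.of fun i j => if (i : ℕ) = 0 ∧ (j : ℕ) = 1 then 1 else 0

/-- `Q_k = Σ_{i=0}^{k-1} B^i · C · B^{k-1-i}`. -/
def mtQ (w : ℕ) (a : Fin w → ZMod 2) (k : ℕ) : Matrix (Fin w) (Fin w) (ZMod 2) :=
  ∑ i ∈ Finset.range k, (mtB w a) ^ i * mtC w * (mtB w a) ^ (k - 1 - i)

/-! `C * M * C` only sees the entry `M 1 0` (0-indexed). Row `i` of `B` is the unit vector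
`e_(i+1)` for `1 ≤ i ≤ w - 2`, so row `1` of `B ^ s` is `e_(1+s)` while `s ≤ w - 2`, and its
entry in column `0` vanishes. -/

lemma mtB_apply_of_lt {w : ℕ} (a : Fin w → ZMod 2) {i : Fin w} (hi : 1 ≤ (i : ℕ))
    (hiw : (i : ℕ) + 1 < w) (j : Fin w) :
    mtB w a i j = if (j : ℕ) = i + 1 then 1 else 0 := by
  simp [mtB, hi, show (i : ℕ) ≠ w - 1 by omega]

lemma mtB_pow_apply_of_lt {w : ℕ} (a : Fin w → ZMod 2) (s : ℕ) {i : Fin w}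
    (hi : 1 ≤ (i : ℕ)) (his : (i : ℕ) + s < w) (j : Fin w) :
    (mtB w a ^ s) i j = if (j : ℕ) = i + s then 1 else 0 := by
  induction s generalizing i with
  | zero => simp [Matrix.one_apply, Fin.ext_iff, eq_comm]
  | succ s ih =>
    rw [pow_succ', Matrix.mul_apply, Finset.sum_eq_single ⟨i + 1, by omega⟩]
    · rw [mtB_apply_of_lt a hi (by omega), if_pos rfl, one_mul, ih (by simp) (by simp; omega)]
      simp only [add_assoc, add_comm 1 s]
    · intro k _ hk
      rw [mtB_apply_of_lt a hi (by omega), if_neg (by simpa [Fin.ext_iff] using hk), zero_mul]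
    · simp

lemma mtC_mul_mul_mtC_eq_zero {w : ℕ} {M : Matrix (Fin w) (Fin w) (ZMod 2)}
    (hM : ∀ k l : Fin w, (k : ℕ) = 1 → (l : ℕ) = 0 → M k l = 0) :
    mtC w * M * mtC w = 0 := by
  ext i j
  simp only [Matrix.mul_apply, Matrix.zero_apply, mtC, Matrix.of_apply, Finset.sum_mul]
  refine Finset.sum_eq_zero fun l _ => Finset.sum_eq_zero fun k _ => ?_
  by_cases hk : (k : ℕ) = 1 <;> by_cases hl : (l : ℕ) = 0 <;> simp [hk, hl, hM]

theorem stmt2 (w : ℕ) (a : Fin w → ZMod 2) (s : ℕ) (hs : s ≤ w - 2) :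
    mtC w * (mtB w a) ^ s * mtC w = 0 :=
  mtC_mul_mul_mtC_eq_zero fun k l hk hl => by
    rw [mtB_pow_apply_of_lt a s hk.ge (by omega), if_neg (by omega)]
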